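/- Let κ ∈ 𝐊 and σ̌ > 0. For every r ∈ (0,∞) with r ≠ R₁, the function f_{κ,σ̌} is twice differentiable at r and satisfies the differential inequality 2σ̌²·f''_{κ,σ̌}(r) − r·κ(r)·f'_{κ,σ̌}(r) ≤ −λ_{κ,σ̌}·f_{κ,σ̌}(r), where λ_{κ,σ̌} = σ̌²/𝒵. -/

import Mathlib

/-
On `(0, R₁)` the function `g` is designed so that `φ g` solves a first-order equation: since
`φ' = -r κ⁻ φ / (2σ̌²)` and `g' = -Φ / (2𝒵 φ)`, one gets `2σ̌² (φ g)' = -r κ⁻ φ g - λ Φ`.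
Subtracting `r κ φ g` leaves `-r κ⁺ φ g - λ Φ`, and `f ≤ Φ` because `g ≤ 1`.

On `(R₁, ∞)` we have `κ ≥ 0`, so `φ` is constant and `g = 1/2`: `f'` is constant and `f'' = 0`.
There the drift `r κ(r) f'(r)` dominates `λ f(r)`, because the definition of `R₁` gives
`R₁ (R₁ - R₀) κ(r) ≥ 4σ̌²`, while `Φ/φ` has slope `1` on `[R₀, R₁]` and is at least the identity, so
`2𝒵 ≥ (R₁ - R₀) Φ(R₁)/φ(R₁) ≥ R₁ (R₁ - R₀)`.
-/

open Real MeasureTheory Set Filter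

noncomputable section

/-- The class `𝐊` of monotonicity profiles: continuous on `(0,∞)`,
`∫₀¹ r (κ r)⁻ dr < ∞` and `liminf_{r→∞} κ(r) > 0`. -/
def memK (κ : ℝ → ℝ) : Prop :=
  ContinuousOn κ (Set.Ioi 0) ∧
  MeasureTheory.IntegrableOn (fun r => r * max (-κ r) 0) (Set.Ioc 0 1) ∧
  ∃ ε > 0, ∀ᶠ r in Filter.atTop, ε ≤ κ r

/-- The set defining `R₀ = inf {R ≥ 0 : κ(r) ≥ 0 for all r ≥ R}`. -/
def R0set (κ : ℝ → ℝ) : Set ℝ := {R | 0 ≤ R ∧ ∀ r, 0 < r → R ≤ r → 0 ≤ κ r}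

def R0 (κ : ℝ → ℝ) : ℝ := sInf (R0set κ)

/-- The set defining `R₁ = inf {R ≥ R₀ : R(R−R₀)·inf_{r ≥ R} κ(r) ≥ 4σ̌²}`. -/
def R1set (κ : ℝ → ℝ) (σ : ℝ) : Set ℝ :=
  {R | R0 κ ≤ R ∧ ∀ r, 0 < r → R ≤ r → 4 * σ ^ 2 ≤ R * (R - R0 κ) * κ r}

def R1 (κ : ℝ → ℝ) (σ : ℝ) : ℝ := sInf (R1set κ σ)

/-- `φ(r) = exp(−(1/(2σ̌²)) ∫₀ʳ s (κ s)⁻ ds)`. -/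
def phiF (κ : ℝ → ℝ) (σ : ℝ) (r : ℝ) : ℝ :=
  Real.exp (-(1 / (2 * σ ^ 2)) * ∫ s in (0:ℝ)..r, s * max (-κ s) 0)

/-- `Φ(r) = ∫₀ʳ φ(s) ds`. -/
def PhiF (κ : ℝ → ℝ) (σ : ℝ) (r : ℝ) : ℝ := ∫ s in (0:ℝ)..r, phiF κ σ s

/-- `𝒵 = ∫₀^{R₁} Φ(s)/φ(s) ds`. -/
def Zconst (κ : ℝ → ℝ) (σ : ℝ) : ℝ :=
  ∫ s in (0:ℝ)..(R1 κ σ), PhiF κ σ s / phiF κ σ s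

/-- `g(r) = 1 − (∫₀^{min(r,R₁)} Φ(s)/φ(s) ds)/(2𝒵)`. -/
def gF (κ : ℝ → ℝ) (σ : ℝ) (r : ℝ) : ℝ :=
  1 - (∫ s in (0:ℝ)..(min r (R1 κ σ)), PhiF κ σ s / phiF κ σ s) / (2 * Zconst κ σ)

/-- `f_{κ,σ̌}(r) = ∫₀ʳ φ(s) g(s) ds`. -/
def fF (κ : ℝ → ℝ) (σ : ℝ) (r : ℝ) : ℝ := ∫ s in (0:ℝ)..r, phiF κ σ s * gF κ σ s

/-- `λ_{κ,σ̌} = σ̌²/𝒵`. -/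
def lamConst (κ : ℝ → ℝ) (σ : ℝ) : ℝ := σ ^ 2 / Zconst κ σ

/-- `C_{κ,σ̌} = φ(R₀)/2`. -/
def CConst (κ : ℝ → ℝ) (σ : ℝ) : ℝ := phiF κ σ (R0 κ) / 2

section IntegralFromZero

variable {F : ℝ → ℝ}

theorem intervalIntegrable_zero_of_continuousOn_Ioi_of_abs_le {u M : ℝ} (hu : 0 ≤ u)
    (hF : ContinuousOn F (Ioi 0)) (hM : ∀ s ∈ Ioc (0:ℝ) u, |F s| ≤ M) :
    IntervalIntegrable F volume 0 u := by
  rw [intervalIntegrable_iff, uIoc_of_le hu]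
  exact (integrable_const M).mono'
    ((hF.mono Ioc_subset_Ioi_self).aestronglyMeasurable measurableSet_Ioc)
    ((ae_restrict_iff' measurableSet_Ioc).2 (Eventually.of_forall hM))

theorem hasDerivAt_integral_zero_of_continuousOn_Ioi {r : ℝ} (hr : 0 < r)
    (hF : ContinuousOn F (Ioi 0)) (hi : IntervalIntegrable F volume 0 r) :
    HasDerivAt (fun u => ∫ s in (0:ℝ)..u, F s) (F r) r :=
  intervalIntegral.integral_hasDerivAt_right hi
    (hF.stronglyMeasurableAtFilter isOpen_Ioi r hr) (hF.continuousAt (Ioi_mem_nhds hr))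

theorem integral_zero_mono_of_nonneg {a b : ℝ} (ha : 0 ≤ a) (hab : a ≤ b)
    (hF : ∀ s, 0 < s → 0 ≤ F s) (hi : IntervalIntegrable F volume 0 b) :
    ∫ s in (0:ℝ)..a, F s ≤ ∫ s in (0:ℝ)..b, F s :=
  intervalIntegral.integral_mono_interval le_rfl ha hab
    ((ae_restrict_iff' measurableSet_Ioc).2 (Eventually.of_forall fun s hs => hF s hs.1)) hi

end IntegralFromZero

section Profile

variable {κ : ℝ → ℝ} {σ : ℝ}

theorem R0set_nonempty (hκ : memK κ) : (R0set κ).Nonempty := by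
  obtain ⟨ε, hε, hev⟩ := hκ.2.2
  obtain ⟨B, hB⟩ := eventually_atTop.1 hev
  exact ⟨max B 0, le_max_right _ _, fun r _ hr => hε.le.trans (hB r ((le_max_left _ _).trans hr))⟩

theorem R0_nonneg (hκ : memK κ) : 0 ≤ R0 κ :=
  le_csInf (R0set_nonempty hκ) fun _ hR => hR.1

theorem kappa_nonneg_of_R0_lt (hκ : memK κ) {s : ℝ} (hs : R0 κ < s) : 0 ≤ κ s := by
  obtain ⟨R, hR, hRs⟩ := (csInf_lt_iff ⟨0, fun _ hR => hR.1⟩ (R0set_nonempty hκ)).1 hs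
  exact hR.2 s ((R0_nonneg hκ).trans_lt hs) hRs.le

abbrev negWeight (κ : ℝ → ℝ) (s : ℝ) : ℝ := s * max (-κ s) 0

theorem negWeight_nonneg {s : ℝ} (hs : 0 ≤ s) : 0 ≤ negWeight κ s :=
  mul_nonneg hs (le_max_right _ _)

theorem negWeight_eq_zero_of_R0_lt (hκ : memK κ) {s : ℝ} (hs : R0 κ < s) : negWeight κ s = 0 := by
  simp [negWeight, kappa_nonneg_of_R0_lt hκ hs]

theorem continuousOn_negWeight (hκ : memK κ) : ContinuousOn (negWeight κ) (Ioi 0) :=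
  continuousOn_id.mul (hκ.1.neg.sup continuousOn_const)

theorem intervalIntegrable_negWeight (hκ : memK κ) {u : ℝ} (hu : 0 ≤ u) :
    IntervalIntegrable (negWeight κ) volume 0 u := by
  rcases le_total u 1 with hu1 | hu1
  · exact (intervalIntegrable_iff_integrableOn_Ioc_of_le hu).2
      (hκ.2.1.mono_set (Ioc_subset_Ioc_right hu1))
  · refine ((intervalIntegrable_iff_integrableOn_Ioc_of_le zero_le_one).2 hκ.2.1).trans ?_
    exact ((continuousOn_negWeight hκ).mono fun s hs => zero_lt_one.trans_le
      (by rw [uIcc_of_le hu1] at hs; exact hs.1)).intervalIntegrable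

theorem integral_negWeight_mono (hκ : memK κ) {a b : ℝ} (ha : 0 ≤ a) (hab : a ≤ b) :
    ∫ s in (0:ℝ)..a, negWeight κ s ≤ ∫ s in (0:ℝ)..b, negWeight κ s :=
  integral_zero_mono_of_nonneg ha hab (fun _ hs => negWeight_nonneg hs.le)
    (intervalIntegrable_negWeight hκ (ha.trans hab))

theorem integral_negWeight_eq_of_R0_le (hκ : memK κ) {a b : ℝ} (ha : R0 κ ≤ a) (hab : a ≤ b) :
    ∫ s in (0:ℝ)..b, negWeight κ s = ∫ s in (0:ℝ)..a, negWeight κ s := by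
  have ha0 : 0 ≤ a := (R0_nonneg hκ).trans ha
  rw [← sub_eq_zero, intervalIntegral.integral_interval_sub_left
    (intervalIntegrable_negWeight hκ (ha0.trans hab)) (intervalIntegrable_negWeight hκ ha0),
    intervalIntegral.integral_of_le hab]
  exact setIntegral_eq_zero_of_forall_eq_zero fun s hs =>
    negWeight_eq_zero_of_R0_lt hκ (ha.trans_lt hs.1)

theorem phiF_pos (u : ℝ) : 0 < phiF κ σ u := exp_pos _

theorem phiF_zero : phiF κ σ 0 = 1 := by simp [phiF]

theorem phiF_antitoneOn (hκ : memK κ) : AntitoneOn (phiF κ σ) (Ici 0) := fun a ha b _ hab =>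
  exp_le_exp.2 <| mul_le_mul_of_nonpos_left (integral_negWeight_mono hκ ha hab)
    (neg_nonpos.2 (by positivity))

theorem phiF_le_one (hκ : memK κ) {u : ℝ} (hu : 0 ≤ u) : phiF κ σ u ≤ 1 :=
  phiF_zero (κ := κ) (σ := σ) ▸ phiF_antitoneOn hκ self_mem_Ici hu hu

theorem phiF_eq_of_R0_le (hκ : memK κ) {a b : ℝ} (ha : R0 κ ≤ a) (hab : a ≤ b) :
    phiF κ σ b = phiF κ σ a := by
  simp only [phiF]
  rw [integral_negWeight_eq_of_R0_le hκ ha hab]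

theorem hasDerivAt_phiF (hκ : memK κ) {r : ℝ} (hr : 0 < r) :
    HasDerivAt (phiF κ σ) (phiF κ σ r * (-(1 / (2 * σ ^ 2)) * negWeight κ r)) r :=
  ((hasDerivAt_integral_zero_of_continuousOn_Ioi hr (continuousOn_negWeight hκ)
    (intervalIntegrable_negWeight hκ hr.le)).const_mul _).exp

theorem continuousOn_phiF (hκ : memK κ) : ContinuousOn (phiF κ σ) (Ioi 0) :=
  fun _ hx => (hasDerivAt_phiF hκ hx).continuousAt.continuousWithinAt

theorem intervalIntegrable_phiF (hκ : memK κ) {u : ℝ} (hu : 0 ≤ u) :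
    IntervalIntegrable (phiF κ σ) volume 0 u :=
  intervalIntegrable_zero_of_continuousOn_Ioi_of_abs_le hu (continuousOn_phiF hκ) fun s hs => by
    rw [abs_of_pos (phiF_pos s)]
    exact phiF_le_one hκ hs.1.le

theorem hasDerivAt_PhiF (hκ : memK κ) {r : ℝ} (hr : 0 < r) :
    HasDerivAt (PhiF κ σ) (phiF κ σ r) r :=
  hasDerivAt_integral_zero_of_continuousOn_Ioi hr (continuousOn_phiF hκ)
    (intervalIntegrable_phiF hκ hr.le)

theorem continuousOn_PhiF (hκ : memK κ) : ContinuousOn (PhiF κ σ) (Ioi 0) :=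
  fun _ hx => (hasDerivAt_PhiF hκ hx).continuousAt.continuousWithinAt

theorem PhiF_nonneg {u : ℝ} (hu : 0 ≤ u) : 0 ≤ PhiF κ σ u :=
  intervalIntegral.integral_nonneg hu fun s _ => (phiF_pos s).le

theorem PhiF_le_self (hκ : memK κ) {u : ℝ} (hu : 0 ≤ u) : PhiF κ σ u ≤ u := by
  simpa [PhiF] using intervalIntegral.integral_mono_on hu (intervalIntegrable_phiF hκ hu)
    intervalIntegrable_const fun s hs => phiF_le_one (σ := σ) hκ hs.1

theorem mul_phiF_le_PhiF (hκ : memK κ) {u : ℝ} (hu : 0 ≤ u) : u * phiF κ σ u ≤ PhiF κ σ u := by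
  simpa [PhiF, mul_comm] using intervalIntegral.integral_mono_on hu intervalIntegrable_const
    (intervalIntegrable_phiF hκ hu) fun s hs => phiF_antitoneOn (σ := σ) hκ hs.1 hu hs.2

theorem PhiF_eq_add_of_R0_le (hκ : memK κ) {a b : ℝ} (ha : R0 κ ≤ a) (hab : a ≤ b) :
    PhiF κ σ b = PhiF κ σ a + (b - a) * phiF κ σ b := by
  have ha0 : 0 ≤ a := (R0_nonneg hκ).trans ha
  have hseg : ∫ s in a..b, phiF κ σ s = (b - a) * phiF κ σ b := by
    rw [intervalIntegral.integral_congr (g := fun _ => phiF κ σ b) fun s hs => by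
      rw [uIcc_of_le hab] at hs
      exact (phiF_eq_of_R0_le hκ (ha.trans hs.1) hs.2).symm]
    simp
  rw [← hseg, ← intervalIntegral.integral_interval_sub_left
    (intervalIntegrable_phiF hκ (ha0.trans hab)) (intervalIntegrable_phiF hκ ha0)]
  simp only [PhiF]
  ring

abbrev PhiRatio (κ : ℝ → ℝ) (σ : ℝ) (s : ℝ) : ℝ := PhiF κ σ s / phiF κ σ s

abbrev PhiRatioIntegral (κ : ℝ → ℝ) (σ : ℝ) (u : ℝ) : ℝ := ∫ s in (0:ℝ)..u, PhiRatio κ σ s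

theorem PhiRatio_nonneg {s : ℝ} (hs : 0 ≤ s) : 0 ≤ PhiRatio κ σ s :=
  div_nonneg (PhiF_nonneg hs) (phiF_pos s).le

theorem self_le_PhiRatio (hκ : memK κ) {u : ℝ} (hu : 0 ≤ u) : u ≤ PhiRatio κ σ u :=
  (le_div_iff₀ (phiF_pos u)).2 (mul_phiF_le_PhiF hκ hu)

theorem PhiRatio_eq_sub_of_R0_le (hκ : memK κ) {a b : ℝ} (ha : R0 κ ≤ a) (hab : a ≤ b) :
    PhiRatio κ σ a = PhiRatio κ σ b - (b - a) := by
  have hφ : phiF κ σ a = phiF κ σ b := (phiF_eq_of_R0_le hκ ha hab).symm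
  rw [PhiRatio, PhiRatio, PhiF_eq_add_of_R0_le hκ ha hab, hφ]
  field_simp [(phiF_pos b).ne']
  ring

theorem continuousOn_PhiRatio (hκ : memK κ) : ContinuousOn (PhiRatio κ σ) (Ioi 0) :=
  (continuousOn_PhiF hκ).div (continuousOn_phiF hκ) fun s _ => (phiF_pos s).ne'

theorem intervalIntegrable_PhiRatio (hκ : memK κ) {u : ℝ} (hu : 0 ≤ u) :
    IntervalIntegrable (PhiRatio κ σ) volume 0 u := by
  refine intervalIntegrable_zero_of_continuousOn_Ioi_of_abs_le (M := u / phiF κ σ u) hu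
    (continuousOn_PhiRatio hκ) fun s hs => ?_
  rw [abs_of_nonneg (PhiRatio_nonneg hs.1.le)]
  exact div_le_div₀ hu ((PhiF_le_self hκ hs.1.le).trans hs.2) (phiF_pos u)
    (phiF_antitoneOn hκ hs.1.le hu hs.2)

theorem hasDerivAt_PhiRatioIntegral (hκ : memK κ) {r : ℝ} (hr : 0 < r) :
    HasDerivAt (PhiRatioIntegral κ σ) (PhiRatio κ σ r) r :=
  hasDerivAt_integral_zero_of_continuousOn_Ioi hr (continuousOn_PhiRatio hκ)
    (intervalIntegrable_PhiRatio hκ hr.le)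

theorem PhiRatioIntegral_nonneg {u : ℝ} (hu : 0 ≤ u) : 0 ≤ PhiRatioIntegral κ σ u :=
  intervalIntegral.integral_nonneg hu fun _ hs => PhiRatio_nonneg hs.1

theorem PhiRatioIntegral_mono (hκ : memK κ) {a b : ℝ} (ha : 0 ≤ a) (hab : a ≤ b) :
    PhiRatioIntegral κ σ a ≤ PhiRatioIntegral κ σ b :=
  integral_zero_mono_of_nonneg ha hab (fun _ hs => PhiRatio_nonneg hs.le)
    (intervalIntegrable_PhiRatio hκ (ha.trans hab))

theorem R1set_nonempty (hκ : memK κ) : (R1set κ σ).Nonempty := by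
  obtain ⟨ε, hε, hev⟩ := hκ.2.2
  have hgrowth : Tendsto (fun R => R * (R - R0 κ)) atTop atTop :=
    tendsto_id.atTop_mul_atTop₀ (tendsto_atTop_add_const_right _ _ tendsto_id)
  obtain ⟨R, hRκ, hR0, hRgrowth⟩ := (eventually_forall_ge_atTop.2 hev |>.and
    ((eventually_ge_atTop (R0 κ)).and (hgrowth.eventually_ge_atTop (4 * σ ^ 2 / ε)))).exists
  refine ⟨R, hR0, fun r _ hr => ?_⟩
  have hRR : 0 ≤ R * (R - R0 κ) := mul_nonneg ((R0_nonneg hκ).trans hR0) (sub_nonneg.2 hR0)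
  calc 4 * σ ^ 2 = 4 * σ ^ 2 / ε * ε := (div_mul_cancel₀ _ hε.ne').symm
    _ ≤ R * (R - R0 κ) * κ r := mul_le_mul hRgrowth (hRκ r hr) hε.le hRR

theorem R0_le_R1 (hκ : memK κ) : R0 κ ≤ R1 κ σ :=
  le_csInf (R1set_nonempty hκ) fun _ hR => hR.1

theorem four_mul_sq_le_of_R1_lt (hκ : memK κ) {r : ℝ} (hr : R1 κ σ < r) :
    4 * σ ^ 2 ≤ R1 κ σ * (R1 κ σ - R0 κ) * κ r := by
  -- `R₁` is a limit of points of `R1set` below `r`, and the defining inequality is closed in `R`.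
  have hr0 : 0 < r := ((R0_nonneg hκ).trans (R0_le_R1 hκ)).trans_lt hr
  have hclosed : IsClosed {R : ℝ | 4 * σ ^ 2 ≤ R * (R - R0 κ) * κ r} :=
    isClosed_le continuous_const (by fun_prop)
  have hR1 : R1 κ σ ∈ Iio r ∩ closure (R1set κ σ) :=
    ⟨hr, csInf_mem_closure (R1set_nonempty hκ) ⟨R0 κ, fun _ hR => hR.1⟩⟩
  exact hclosed.closure_subset_iff.2 (fun R hR => hR.2.2 r hr0 hR.1.le)
    (isOpen_Iio.inter_closure hR1)

theorem R0_lt_R1 (hκ : memK κ) (hσ : 0 < σ) : R0 κ < R1 κ σ := by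
  refine (R0_le_R1 hκ).lt_of_ne fun h => ?_
  have h4 := four_mul_sq_le_of_R1_lt (σ := σ) hκ (lt_add_one (R1 κ σ))
  rw [← h, sub_self, mul_zero, zero_mul] at h4
  linarith [pow_pos hσ 2]

theorem R1_pos (hκ : memK κ) (hσ : 0 < σ) : 0 < R1 κ σ :=
  (R0_nonneg hκ).trans_lt (R0_lt_R1 hκ hσ)

theorem mul_PhiRatio_R1_le_two_mul_Zconst (hκ : memK κ) :
    (R1 κ σ - R0 κ) * PhiRatio κ σ (R1 κ σ) ≤ 2 * Zconst κ σ := by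
  set a := R0 κ
  set b := R1 κ σ
  set w := PhiRatio κ σ b
  have ha : 0 ≤ a := R0_nonneg hκ
  have hab : a ≤ b := R0_le_R1 hκ
  have htail : ∫ s in a..b, PhiRatio κ σ s = (b - a) * w - (b - a) ^ 2 / 2 := by
    rw [intervalIntegral.integral_congr (g := fun s => s - (b - w)) fun s hs => by
      rw [uIcc_of_le hab] at hs
      simp only [PhiRatio_eq_sub_of_R0_le hκ hs.1 hs.2, w]
      ring]
    rw [intervalIntegral.integral_sub intervalIntegral.intervalIntegrable_id
      intervalIntegrable_const, integral_id, intervalIntegral.integral_const, smul_eq_mul]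
    ring
  have hsplit : Zconst κ σ - PhiRatioIntegral κ σ a = ∫ s in a..b, PhiRatio κ σ s :=
    intervalIntegral.integral_interval_sub_left (intervalIntegrable_PhiRatio hκ (ha.trans hab))
      (intervalIntegrable_PhiRatio hκ ha)
  have hw : b - a ≤ w := by linarith [self_le_PhiRatio (σ := σ) hκ (ha.trans hab)]
  linarith [PhiRatioIntegral_nonneg (κ := κ) (σ := σ) ha,
    mul_le_mul_of_nonneg_left hw (sub_nonneg.2 hab)]

theorem Zconst_pos (hκ : memK κ) (hσ : 0 < σ) : 0 < Zconst κ σ := by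
  have hQ : 0 < R1 κ σ - R0 κ := sub_pos.2 (R0_lt_R1 hκ hσ)
  have hw : 0 < PhiRatio κ σ (R1 κ σ) :=
    (R1_pos hκ hσ).trans_le (self_le_PhiRatio hκ (R1_pos hκ hσ).le)
  linarith [mul_pos hQ hw, mul_PhiRatio_R1_le_two_mul_Zconst (σ := σ) hκ]

theorem gF_eq_half_of_R1_le (hκ : memK κ) (hσ : 0 < σ) {u : ℝ} (hu : R1 κ σ ≤ u) :
    gF κ σ u = 1 / 2 := by
  have hZ := (Zconst_pos hκ hσ).ne'
  change 1 - PhiRatioIntegral κ σ (min u (R1 κ σ)) / (2 * Zconst κ σ) = 1 / 2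
  rw [min_eq_right hu]
  change 1 - Zconst κ σ / (2 * Zconst κ σ) = 1 / 2
  field_simp
  ring

theorem half_le_gF (hκ : memK κ) (hσ : 0 < σ) {u : ℝ} (hu : 0 ≤ u) : 1 / 2 ≤ gF κ σ u := by
  have hZ := Zconst_pos hκ hσ
  have hP : PhiRatioIntegral κ σ (min u (R1 κ σ)) ≤ Zconst κ σ :=
    PhiRatioIntegral_mono hκ (le_min hu (R1_pos hκ hσ).le) (min_le_right _ _)
  have hdiv : PhiRatioIntegral κ σ (min u (R1 κ σ)) / (2 * Zconst κ σ) ≤ 1 / 2 := by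
    rw [div_le_iff₀ (by positivity)]
    linarith
  change 1 / 2 ≤ 1 - PhiRatioIntegral κ σ (min u (R1 κ σ)) / (2 * Zconst κ σ)
  linarith

theorem gF_le_one (hκ : memK κ) (hσ : 0 < σ) {u : ℝ} (hu : 0 ≤ u) : gF κ σ u ≤ 1 := by
  have hP : 0 ≤ PhiRatioIntegral κ σ (min u (R1 κ σ)) :=
    PhiRatioIntegral_nonneg (le_min hu (R1_pos hκ hσ).le)
  have hZ := Zconst_pos hκ hσ
  have hdiv : 0 ≤ PhiRatioIntegral κ σ (min u (R1 κ σ)) / (2 * Zconst κ σ) := by positivity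
  change 1 - PhiRatioIntegral κ σ (min u (R1 κ σ)) / (2 * Zconst κ σ) ≤ 1
  linarith

theorem continuousOn_gF (hκ : memK κ) (hσ : 0 < σ) : ContinuousOn (gF κ σ) (Ioi 0) := by
  intro u hu
  have hP : ContinuousAt (PhiRatioIntegral κ σ) (min u (R1 κ σ)) :=
    (hasDerivAt_PhiRatioIntegral hκ (lt_min hu (R1_pos hκ hσ))).continuousAt
  exact (continuousAt_const.sub ((hP.comp (f := fun v => min v (R1 κ σ))
    (by fun_prop)).div_const _)).continuousWithinAt

theorem hasDerivAt_gF_of_lt_R1 (hκ : memK κ) {r : ℝ} (hr : 0 < r) (hlt : r < R1 κ σ) :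
    HasDerivAt (gF κ σ) (-(PhiRatio κ σ r / (2 * Zconst κ σ))) r := by
  have h := ((hasDerivAt_PhiRatioIntegral (σ := σ) hκ hr).div_const (2 * Zconst κ σ)).const_sub 1
  refine h.congr_of_eventuallyEq ?_
  filter_upwards [Iio_mem_nhds hlt] with u hu
  rw [gF, min_eq_left (le_of_lt hu)]

theorem intervalIntegrable_phiF_mul_gF (hκ : memK κ) (hσ : 0 < σ) {u : ℝ} (hu : 0 ≤ u) :
    IntervalIntegrable (fun s => phiF κ σ s * gF κ σ s) volume 0 u := by
  refine intervalIntegrable_zero_of_continuousOn_Ioi_of_abs_le (M := 1) hu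
    ((continuousOn_phiF hκ).mul (continuousOn_gF hκ hσ)) fun s hs => ?_
  have hg : |gF κ σ s| ≤ 1 :=
    abs_le.2 ⟨by linarith [half_le_gF hκ hσ hs.1.le], gF_le_one hκ hσ hs.1.le⟩
  rw [abs_mul, abs_of_pos (phiF_pos s)]
  exact mul_le_one₀ (phiF_le_one hκ hs.1.le) (abs_nonneg _) hg

theorem hasDerivAt_fF (hκ : memK κ) (hσ : 0 < σ) {r : ℝ} (hr : 0 < r) :
    HasDerivAt (fF κ σ) (phiF κ σ r * gF κ σ r) r :=
  hasDerivAt_integral_zero_of_continuousOn_Ioi hr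
    ((continuousOn_phiF hκ).mul (continuousOn_gF hκ hσ))
    (intervalIntegrable_phiF_mul_gF hκ hσ hr.le)

theorem fF_le_PhiF (hκ : memK κ) (hσ : 0 < σ) {u : ℝ} (hu : 0 ≤ u) : fF κ σ u ≤ PhiF κ σ u :=
  intervalIntegral.integral_mono_on hu (intervalIntegrable_phiF_mul_gF hκ hσ hu)
    (intervalIntegrable_phiF hκ hu) fun s hs =>
      mul_le_of_le_one_right (phiF_pos s).le (gF_le_one hκ hσ hs.1)

theorem fF_le_of_R1_le (hκ : memK κ) (hσ : 0 < σ) {r : ℝ} (hr : R1 κ σ ≤ r) :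
    fF κ σ r ≤ phiF κ σ (R1 κ σ) * (PhiRatio κ σ (R1 κ σ) + (r - R1 κ σ) / 2) := by
  set b := R1 κ σ
  have hb : 0 < b := R1_pos hκ hσ
  have htail : ∫ s in b..r, phiF κ σ s * gF κ σ s = (r - b) * (phiF κ σ b * (1 / 2)) := by
    rw [intervalIntegral.integral_congr (g := fun _ => phiF κ σ b * (1 / 2)) fun s hs => by
      rw [uIcc_of_le hr] at hs
      rw [phiF_eq_of_R0_le hκ (R0_le_R1 hκ) hs.1, gF_eq_half_of_R1_le hκ hσ hs.1]]
    rw [intervalIntegral.integral_const, smul_eq_mul]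
  have hsplit : fF κ σ r - fF κ σ b = ∫ s in b..r, phiF κ σ s * gF κ σ s :=
    intervalIntegral.integral_interval_sub_left
      (intervalIntegrable_phiF_mul_gF hκ hσ (hb.le.trans hr))
      (intervalIntegrable_phiF_mul_gF hκ hσ hb.le)
  have hφ : phiF κ σ b * PhiRatio κ σ b = PhiF κ σ b := mul_div_cancel₀ _ (phiF_pos b).ne'
  linarith [fF_le_PhiF hκ hσ hb.le]

theorem generator_ineq_of_lt_R1 (hκ : memK κ) (hσ : 0 < σ) {r : ℝ} (hr : 0 < r)
    (hlt : r < R1 κ σ) :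
    ∃ D : ℝ, HasDerivAt (fun s => phiF κ σ s * gF κ σ s) D r ∧
      2 * σ ^ 2 * D - r * κ r * (phiF κ σ r * gF κ σ r) ≤ -lamConst κ σ * fF κ σ r := by
  refine ⟨_, (hasDerivAt_phiF hκ hr).mul (hasDerivAt_gF_of_lt_R1 hκ hr hlt), ?_⟩
  have hZ := Zconst_pos hκ hσ
  have hφ := phiF_pos (κ := κ) (σ := σ) r
  have hD : 2 * σ ^ 2 * (phiF κ σ r * (-(1 / (2 * σ ^ 2)) * negWeight κ r) * gF κ σ r +
      phiF κ σ r * -(PhiRatio κ σ r / (2 * Zconst κ σ)))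
      = -(r * max (-κ r) 0) * (phiF κ σ r * gF κ σ r) - lamConst κ σ * PhiF κ σ r := by
    simp only [negWeight, PhiRatio, lamConst]
    field_simp
    ring
  have hdrift : 0 ≤ r * (max (-κ r) 0 + κ r) * (phiF κ σ r * gF κ σ r) :=
    mul_nonneg (mul_nonneg hr.le (by linarith [le_max_left (-κ r) 0]))
      (mul_nonneg hφ.le (by linarith [half_le_gF hκ hσ hr.le]))
  have hf : lamConst κ σ * fF κ σ r ≤ lamConst κ σ * PhiF κ σ r :=
    mul_le_mul_of_nonneg_left (fF_le_PhiF hκ hσ hr.le) (div_pos (pow_pos hσ 2) hZ).le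
  rw [hD]
  linarith

theorem lamConst_mul_fF_le_of_R1_lt (hκ : memK κ) (hσ : 0 < σ) {r : ℝ} (hr : R1 κ σ < r) :
    lamConst κ σ * fF κ σ r ≤ r * κ r * (phiF κ σ (R1 κ σ) * (1 / 2)) := by
  set b := R1 κ σ
  set Q := b - R0 κ
  set w := PhiRatio κ σ b
  set Z := Zconst κ σ
  have hb : 0 < b := R1_pos hκ hσ
  have hQ : 0 < Q := sub_pos.2 (R0_lt_R1 hκ hσ)
  have hZ : 0 < Z := Zconst_pos hκ hσ
  have hκr : 4 * σ ^ 2 ≤ b * Q * κ r := four_mul_sq_le_of_R1_lt hκ hr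
  have hQw : Q * w ≤ 2 * Z := mul_PhiRatio_R1_le_two_mul_Zconst hκ
  have hbQ : b * Q ≤ 2 * Z := by
    linarith [mul_le_mul_of_nonneg_right (self_le_PhiRatio (σ := σ) hκ hb.le) hQ.le]
  have key : σ ^ 2 * (w + (r - b) / 2) ≤ Z * (r * κ r / 2) := by
    refine le_of_mul_le_mul_right ?_ (mul_pos hb hQ)
    linarith [mul_le_mul_of_nonneg_left hQw (mul_nonneg (sq_nonneg σ) hb.le),
      mul_le_mul_of_nonneg_left hbQ (mul_nonneg (sq_nonneg σ) (sub_nonneg.2 hr.le)),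
      mul_le_mul_of_nonneg_left hκr (mul_pos hZ (hb.trans hr)).le,
      mul_le_mul_of_nonneg_left hr.le (mul_pos (pow_pos hσ 2) hZ).le]
  calc lamConst κ σ * fF κ σ r ≤ σ ^ 2 / Z * (phiF κ σ b * (w + (r - b) / 2)) :=
        mul_le_mul_of_nonneg_left (fF_le_of_R1_le hκ hσ hr.le) (div_nonneg (sq_nonneg σ) hZ.le)
    _ = phiF κ σ b * (σ ^ 2 * (w + (r - b) / 2) / Z) := by ring
    _ ≤ phiF κ σ b * (r * κ r / 2) :=
        mul_le_mul_of_nonneg_left ((div_le_iff₀ hZ).2 (by linarith)) (phiF_pos b).le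
    _ = r * κ r * (phiF κ σ b * (1 / 2)) := by ring

theorem generator_ineq_of_R1_lt (hκ : memK κ) (hσ : 0 < σ) {r : ℝ} (hr : R1 κ σ < r) :
    ∃ D : ℝ, HasDerivAt (fun s => phiF κ σ s * gF κ σ s) D r ∧
      2 * σ ^ 2 * D - r * κ r * (phiF κ σ r * gF κ σ r) ≤ -lamConst κ σ * fF κ σ r := by
  have hconst :
      (fun s => phiF κ σ s * gF κ σ s) =ᶠ[nhds r] fun _ => phiF κ σ (R1 κ σ) * (1 / 2) := by
    filter_upwards [Ioi_mem_nhds hr] with s hs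
    rw [phiF_eq_of_R0_le hκ (R0_le_R1 hκ) (le_of_lt hs), gF_eq_half_of_R1_le hκ hσ (le_of_lt hs)]
  refine ⟨0, (hasDerivAt_const r _).congr_of_eventuallyEq hconst, ?_⟩
  rw [phiF_eq_of_R0_le hκ (R0_le_R1 hκ) hr.le, gF_eq_half_of_R1_le hκ hσ hr.le]
  linarith [lamConst_mul_fF_le_of_R1_lt hκ hσ hr]

end Profile

/-- for every `r ∈ (0,∞)` with `r ≠ R₁`, the function `f_{κ,σ̌}` is twice
differentiable at `r` (with first derivative `φ·g`) and its second derivative `D` there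
satisfies `2σ̌² D − r κ(r) f'(r) ≤ −λ_{κ,σ̌} f(r)`. -/
theorem stmt3 (κ : ℝ → ℝ) (σ : ℝ) (hκ : memK κ) (hσ : 0 < σ) :
    ∀ r, 0 < r → r ≠ R1 κ σ →
      HasDerivAt (fF κ σ) (phiF κ σ r * gF κ σ r) r ∧
      ∃ D : ℝ, HasDerivAt (fun s => phiF κ σ s * gF κ σ s) D r ∧
        2 * σ ^ 2 * D - r * κ r * (phiF κ σ r * gF κ σ r) ≤ -lamConst κ σ * fF κ σ r := by
  intro r hr hne
  refine ⟨hasDerivAt_fF hκ hσ hr, ?_⟩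
  rcases hne.lt_or_gt with hlt | hgt
  · exact generator_ineq_of_lt_R1 hκ hσ hr hlt
  · exact generator_ineq_of_R1_lt hκ hσ hgt
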